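/- Let X ⊆ ℝ^n be convex closed, f convex on X, d differentiable and 1-strongly convex with Bregman divergence V[x](z) = d(z) − d(x) − ⟨∇d(x), z − x⟩, h > 0 a step-size, x ∈ X, and let g be a subgradient of f at x. If x⁺ = argmin_{z ∈ X} { ⟨h·g, z⟩ + V[x](z) }, then for any z ∈ X: h·(f(x) − f(z)) ≤ h·⟨g, x − z⟩ ≤ (h²/2)·‖g‖₂² + V[x](z) − V[x⁺](z). -/

import Mathlib

/-!
First-order optimality of `x⁺` on the convex set `X` gives `⟪h • g + ∇d(x⁺) - ∇d(x), z - x⁺⟫ ≥ 0`.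
The three-point identity turns `⟪∇d(x⁺) - ∇d(x), z - x⁺⟫` into `V[x](z) - V[x⁺](z) - V[x](x⁺)`, and
the leftover `h ⟪g, x - x⁺⟫` is bounded by Young's inequality by `(h²/2)‖g‖² + ½‖x⁺ - x‖²`, whose
second term is absorbed by `V[x](x⁺)` thanks to the strong convexity of `d`.
-/

open scoped RealInnerProductSpace

open InnerProductSpace

variable {E : Type*} [NormedAddCommGroup E] [InnerProductSpace ℝ E]

theorem mul_inner_le_sq_norm_add_sq_norm (h : ℝ) (g u : E) :
    h * ⟪g, u⟫ ≤ h ^ 2 / 2 * ‖g‖ ^ 2 + 1 / 2 * ‖u‖ ^ 2 := by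
  have hsq := norm_sub_sq_real (h • g) u
  rw [norm_smul, mul_pow, Real.norm_eq_abs, sq_abs, real_inner_smul_left] at hsq
  linarith [sq_nonneg ‖h • g - u‖]

theorem IsMinOn.inner_sub_nonneg_of_hasGradientAt [CompleteSpace E] {φ : E → ℝ} {s : Set E}
    {a g z : E} (hs : Convex ℝ s) (hmin : IsMinOn φ s a) (ha : a ∈ s) (hz : z ∈ s)
    (hφ : HasGradientAt φ g a) : 0 ≤ ⟪g, z - a⟫ := by
  simpa using hmin.localize.hasFDerivWithinAt_nonneg hφ.hasFDerivAt.hasFDerivWithinAt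
    (sub_mem_posTangentConeAt_of_segment_subset (hs.segment_subset ha hz))

def bregmanDiv (d : E → ℝ) (gd : E → E) (w v : E) : ℝ :=
  d v - d w - ⟪gd w, v - w⟫

section Bregman

variable (d : E → ℝ) (gd : E → E)

theorem bregmanDiv_three_point (x y z : E) :
    bregmanDiv d gd x z - bregmanDiv d gd y z - bregmanDiv d gd x y = ⟪gd y - gd x, z - y⟫ := by
  have hsplit : z - x = (z - y) + (y - x) := by abel
  simp only [bregmanDiv, hsplit, inner_add_right, inner_sub_left]
  ring

theorem half_sq_norm_sub_le_bregmanDiv {w v : E}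
    (hsc : d w + ⟪gd w, v - w⟫ + 1 / 2 * ‖v - w‖ ^ 2 ≤ d v) :
    1 / 2 * ‖v - w‖ ^ 2 ≤ bregmanDiv d gd w v := by
  rw [bregmanDiv]
  linarith

variable [CompleteSpace E]

theorem hasGradientAt_inner_add_bregmanDiv (c x : E) {y : E} (hd : HasGradientAt d (gd y) y) :
    HasGradientAt (fun z ↦ ⟪c, z⟫ + bregmanDiv d gd x z) (c + (gd y - gd x)) y := by
  rw [hasGradientAt_iff_hasFDerivAt, map_add, map_sub]
  have hV := (hd.hasFDerivAt.sub_const (d x)).sub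
    ((toDual ℝ E (gd x)).hasFDerivAt.sub_const ⟪gd x, x⟫)
  refine ((toDual ℝ E c).hasFDerivAt.add hV).congr_of_eventuallyEq (.of_forall fun z ↦ ?_)
  simp [bregmanDiv, inner_sub_right]

theorem inner_le_of_isMinOn_inner_add_bregmanDiv {X : Set E} (hX : Convex ℝ X) {h : ℝ}
    {g x xp z : E} (hd : HasGradientAt d (gd xp) xp)
    (hsc : d x + ⟪gd x, xp - x⟫ + 1 / 2 * ‖xp - x‖ ^ 2 ≤ d xp) (hxpX : xp ∈ X)
    (hxpmin : IsMinOn (fun z ↦ ⟪h • g, z⟫ + bregmanDiv d gd x z) X xp) (hz : z ∈ X) :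
    h * ⟪g, x - z⟫ ≤ h ^ 2 / 2 * ‖g‖ ^ 2 + bregmanDiv d gd x z - bregmanDiv d gd xp z := by
  have hopt := hxpmin.inner_sub_nonneg_of_hasGradientAt hX hxpX hz
    (hasGradientAt_inner_add_bregmanDiv d gd (h • g) x hd)
  rw [inner_add_left, ← bregmanDiv_three_point, real_inner_smul_left] at hopt
  have hV := half_sq_norm_sub_le_bregmanDiv d gd hsc
  have hyoung := mul_inner_le_sq_norm_add_sq_norm h g (x - xp)
  have hsplit : ⟪g, x - z⟫ = ⟪g, x - xp⟫ - ⟪g, z - xp⟫ := by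
    rw [← inner_sub_right, sub_sub_sub_cancel_right]
  rw [norm_sub_rev] at hyoung
  rw [hsplit]
  linarith

end Bregman

theorem mirror_descent_step_property_general {n : ℕ}
    (X : Set (EuclideanSpace ℝ (Fin n))) (hXconv : Convex ℝ X)
    (f : EuclideanSpace ℝ (Fin n) → ℝ)
    (d : EuclideanSpace ℝ (Fin n) → ℝ)
    (gd : EuclideanSpace ℝ (Fin n) → EuclideanSpace ℝ (Fin n))
    (hgd : ∀ w, HasGradientAt d (gd w) w)
    (hdsc : ∀ w v, d w + ⟪gd w, v - w⟫ + 1 / 2 * ‖v - w‖ ^ 2 ≤ d v)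
    (V : EuclideanSpace ℝ (Fin n) → EuclideanSpace ℝ (Fin n) → ℝ)
    (hV : ∀ w v, V w v = d v - d w - ⟪gd w, v - w⟫)
    (h : ℝ) (hh : 0 < h)
    (x : EuclideanSpace ℝ (Fin n))
    (gx : EuclideanSpace ℝ (Fin n))
    (hgx : ∀ z ∈ X, f x + ⟪gx, z - x⟫ ≤ f z)
    (xp : EuclideanSpace ℝ (Fin n)) (hxpX : xp ∈ X)
    (hxpmin : IsMinOn (fun z => ⟪h • gx, z⟫ + V x z) X xp) :
    ∀ z ∈ X, h * (f x - f z) ≤ h * ⟪gx, x - z⟫ ∧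
      h * ⟪gx, x - z⟫ ≤ h ^ 2 / 2 * ‖gx‖ ^ 2 + V x z - V xp z := by
  obtain rfl : V = bregmanDiv d gd := funext₂ hV
  intro z hz
  refine ⟨mul_le_mul_of_nonneg_left ?_ hh.le, ?_⟩
  · have hsub := hgx z hz
    rw [← neg_sub z x, inner_neg_right]
    linarith
  · exact inner_le_of_isMinOn_inner_add_bregmanDiv d gd hXconv (hgd xp) (hdsc x xp) hxpX
      hxpmin hz

/-- Main property of the Mirror Descent step: for any `z ∈ X`,
`h (f(x) - f(z)) ≤ h ⟪g, x - z⟫ ≤ (h²/2)‖g‖² + V[x](z) - V[x⁺](z)`. -/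
theorem mirror_descent_step_property {n : ℕ}
    (X : Set (EuclideanSpace ℝ (Fin n))) (hXconv : Convex ℝ X) (hXcl : IsClosed X)
    (f : EuclideanSpace ℝ (Fin n) → ℝ) (hfconv : ConvexOn ℝ X f)
    (d : EuclideanSpace ℝ (Fin n) → ℝ)
    (gd : EuclideanSpace ℝ (Fin n) → EuclideanSpace ℝ (Fin n))
    (hgd : ∀ w, HasGradientAt d (gd w) w)
    (hdsc : ∀ w v, d w + ⟪gd w, v - w⟫ + 1 / 2 * ‖v - w‖ ^ 2 ≤ d v)
    (V : EuclideanSpace ℝ (Fin n) → EuclideanSpace ℝ (Fin n) → ℝ)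
    (hV : ∀ w v, V w v = d v - d w - ⟪gd w, v - w⟫)
    (h : ℝ) (hh : 0 < h)
    (x : EuclideanSpace ℝ (Fin n)) (hx : x ∈ X)
    (gx : EuclideanSpace ℝ (Fin n))
    (hgx : ∀ z ∈ X, f x + ⟪gx, z - x⟫ ≤ f z)
    (xp : EuclideanSpace ℝ (Fin n)) (hxpX : xp ∈ X)
    (hxpmin : IsMinOn (fun z => ⟪h • gx, z⟫ + V x z) X xp) :
    ∀ z ∈ X, h * (f x - f z) ≤ h * ⟪gx, x - z⟫ ∧
      h * ⟪gx, x - z⟫ ≤ h ^ 2 / 2 * ‖gx‖ ^ 2 + V x z - V xp z :=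
  mirror_descent_step_property_general X hXconv f d gd hgd hdsc V hV h hh x gx hgx xp hxpX hxpmin
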